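/- Let m ≥ 2 and let S' be the (2m+3)×(2m+3) nonnegative matrix with first column (1,0,0,1,1,...,1,0)ᵀ, columns 2 through 2m+2 forming the pattern (0-row then identity-like structure) as follows: row 1 = (1,0,...,0,m), row 2 = (0,1,0,...,0,m−1), row 3 = (0,0,1,0,...,0,m−1), rows 4 through 2m+2 have a 1 in column 1, a 1 in one distinct column among 4,...,2m+2, and last entry m−1, and last row = (0,1,0,1,0,...,0,m−2). Then every Hadamard square root of S' has rank at least 2m+3; in particular the minimum Hadamard square root rank of S' exceeds 2m+2. -/

import Mathlib

/-- The `(2m+3) × (2m+3)` submatrix `S'` of the slack matrix of the stable set polytope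
of an odd hole on `2m+1` vertices. -/
def oddHoleSlack (m : ℕ) : Matrix (Fin (2*m+3)) (Fin (2*m+3)) ℝ := fun i j =>
  if j.val = 0 then
    (if i.val = 0 ∨ (3 ≤ i.val ∧ i.val ≤ 2*m+1) then 1 else 0)
  else if j.val = 2*m+2 then
    (if i.val = 0 then (m : ℝ) else if i.val = 2*m+2 then (m : ℝ) - 2 else (m : ℝ) - 1)
  else if i.val = 2*m+2 then
    (if j.val = 1 ∨ j.val = 3 then 1 else 0)
  else if i.val = j.val then 1 else 0

/-!
A Hadamard square root `N` of `S'` is nonsingular. Let `N c = 0` and `t = c_last`. Rows `0`,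
`1`, `3` and the last row only see the coordinates `0, 1, 3, last`, and their entries squaring
to `1` are `±1`; they give `c₀ = ±√m t`, `c₁ = ±√(m-1) t`, `c₃ = ±c₀ ± √(m-1) t`, and then
`±√(m-2) t = ±√(m-1) t ± (±√m ± √(m-1)) t`. Squaring this out twice leaves `t⁴ = 0`.
Every other row has a `±1` on the diagonal and is otherwise supported on the columns `0` and
`last`, so the remaining coordinates vanish as well.
-/

open Matrix

theorem eq_zero_of_add_add_eq_of_sq_eq_mul_sq {m t x y z w : ℝ} (hx : x ^ 2 = m * t ^ 2)
    (hy : y ^ 2 = (m - 1) * t ^ 2) (hz : z ^ 2 = (m - 1) * t ^ 2)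
    (hw : w ^ 2 = (m - 2) * t ^ 2) (h : w = x + y + z) : t = 0 := by
  subst h
  have hsum : x * y + x * z + y * z = -(m * t ^ 2) := by
    linear_combination (hw - hx - hy - hz) / 2
  suffices t ^ 4 = 0 from pow_eq_zero_iff (by norm_num) |>.mp this
  rcases sq_eq_sq_iff_eq_or_eq_neg.mp (hy.trans hz.symm) with rfl | rfl
  · have hxy : 2 * x * y = (1 - 2 * m) * t ^ 2 := by linear_combination hsum - hy
    -- `(2xy)² = 4m(m-1)t⁴` and `(1 - 2m)² - 4m(m-1) = 1`
    linear_combination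
      -(2 * x * y + (1 - 2 * m) * t ^ 2) * hxy + 4 * y ^ 2 * hx + 4 * m * t ^ 2 * hy
  · linear_combination t ^ 2 * (hsum + hz)

theorem eq_neg_mul_of_mul_add_eq_zero {R : Type*} [CommRing R] {u a b : R} (hu : u ^ 2 = 1)
    (h : u * a + b = 0) : a = -(u * b) := by
  linear_combination u * h - a * hu

/- The coefficients form a Hadamard square root of the matrix of `S'` on the rows and columns
`0, 1, 3, last`: `!![1, 0, 0, m; 0, 1, 0, m-1; 1, 0, 1, m-1; 0, 1, 1, m-2]`. -/
theorem eq_zero_of_hadamard_system {m a b p q r₀ r₃ r w₁ w₃ w c₀ c₁ c₃ t : ℝ}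
    (ha : a ^ 2 = 1) (hb : b ^ 2 = m) (hp : p ^ 2 = 1) (hq : q ^ 2 = m - 1)
    (hr₀ : r₀ ^ 2 = 1) (hr₃ : r₃ ^ 2 = 1) (hr : r ^ 2 = m - 1)
    (hw₁ : w₁ ^ 2 = 1) (hw₃ : w₃ ^ 2 = 1) (hw : w ^ 2 = m - 2)
    (e₀ : a * c₀ + b * t = 0) (e₁ : p * c₁ + q * t = 0) (e₃ : r₀ * c₀ + r₃ * c₃ + r * t = 0)
    (e : w₁ * c₁ + w₃ * c₃ + w * t = 0) : t = 0 := by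
  have hc₀ := eq_neg_mul_of_mul_add_eq_zero ha e₀
  have hc₁ := eq_neg_mul_of_mul_add_eq_zero hp e₁
  have hc₃ := eq_neg_mul_of_mul_add_eq_zero hr₃
    (by linear_combination e₃ : r₃ * c₃ + (r₀ * c₀ + r * t) = 0)
  subst hc₀ hc₁ hc₃
  apply eq_zero_of_add_add_eq_of_sq_eq_mul_sq (m := m) (x := -(w₃ * r₃ * r₀ * a * b * t))
    (y := w₁ * p * q * t) (z := w₃ * r₃ * r * t) (w := w * t)
  · simp only [neg_sq, mul_pow, hw₃, hr₃, hr₀, ha, hb, one_mul]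
  · simp only [mul_pow, hw₁, hp, hq, one_mul]
  · simp only [mul_pow, hw₃, hr₃, hr, one_mul]
  · rw [mul_pow, hw]
  · linear_combination e

theorem Matrix.mulVec_apply_eq_sum_of_support {ι κ R : Type*} [Fintype κ]
    [NonUnitalNonAssocSemiring R] (N : Matrix ι κ R) (c : κ → R) {i : ι} (s : Finset κ)
    (h : ∀ j ∉ s, N i j = 0) : (N *ᵥ c) i = ∑ j ∈ s, N i j * c j :=
  (Finset.sum_subset (Finset.subset_univ s) fun j _ hj => by simp [h j hj]).symm

namespace oddHoleSlack

variable {m : ℕ} {i j : Fin (2*m+3)}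

theorem apply_first_row_of_ne (hi : i.val = 0) (hj₀ : j.val ≠ 0) (hj : j.val ≠ 2*m+2) :
    oddHoleSlack m i j = 0 := by
  simp only [oddHoleSlack]; split_ifs <;> first | rfl | (exfalso; omega)

theorem apply_middle_row_of_ne (hi₁ : 1 ≤ i.val) (hi₂ : i.val ≤ 2*m+1) (hj₀ : j.val ≠ 0)
    (hij : j.val ≠ i.val) (hj : j.val ≠ 2*m+2) : oddHoleSlack m i j = 0 := by
  simp only [oddHoleSlack]; split_ifs <;> first | rfl | (exfalso; omega)

theorem apply_last_row_of_ne (hi : i.val = 2*m+2) (hj₁ : j.val ≠ 1) (hj₃ : j.val ≠ 3)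
    (hj : j.val ≠ 2*m+2) : oddHoleSlack m i j = 0 := by
  simp only [oddHoleSlack]; split_ifs <;> first | rfl | (exfalso; omega)

theorem apply_first_first (hi : i.val = 0) (hj : j.val = 0) : oddHoleSlack m i j = 1 := by
  simp only [oddHoleSlack]; split_ifs <;> first | rfl | (exfalso; omega)

theorem apply_first_last (hi : i.val = 0) (hj : j.val = 2*m+2) : oddHoleSlack m i j = m := by
  simp only [oddHoleSlack]; split_ifs <;> first | rfl | (exfalso; omega)

theorem apply_middle_diag (hi₁ : 1 ≤ i.val) (hi₂ : i.val ≤ 2*m+1) :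
    oddHoleSlack m i i = 1 := by
  simp only [oddHoleSlack]; split_ifs <;> first | rfl | (exfalso; omega)

theorem apply_middle_last (hi₁ : 1 ≤ i.val) (hi₂ : i.val ≤ 2*m+1) (hj : j.val = 2*m+2) :
    oddHoleSlack m i j = m - 1 := by
  simp only [oddHoleSlack]; split_ifs <;> first | rfl | (exfalso; omega)

theorem apply_one_first (hi : i.val = 1) (hj : j.val = 0) : oddHoleSlack m i j = 0 := by
  simp only [oddHoleSlack]; split_ifs <;> first | rfl | (exfalso; omega)

theorem apply_three_first (hi : i.val = 3) (hj : j.val = 0) : oddHoleSlack m i j = 1 := by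
  simp only [oddHoleSlack]; split_ifs <;> first | rfl | (exfalso; omega)

theorem apply_last_one (hi : i.val = 2*m+2) (hj : j.val = 1) : oddHoleSlack m i j = 1 := by
  simp only [oddHoleSlack]; split_ifs <;> first | rfl | (exfalso; omega)

theorem apply_last_three (hi : i.val = 2*m+2) (hj : j.val = 3) : oddHoleSlack m i j = 1 := by
  simp only [oddHoleSlack]; split_ifs <;> first | rfl | (exfalso; omega)

theorem apply_last_last (hi : i.val = 2*m+2) (hj : j.val = 2*m+2) :
    oddHoleSlack m i j = m - 2 := by
  simp only [oddHoleSlack]; split_ifs <;> first | rfl | (exfalso; omega)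

variable {N : Matrix (Fin (2*m+3)) (Fin (2*m+3)) ℝ} {c : Fin (2*m+3) → ℝ}

theorem hadamardSqrt_eq_zero (hN : ∀ i j, N i j ^ 2 = oddHoleSlack m i j)
    (h : oddHoleSlack m i j = 0) : N i j = 0 :=
  pow_eq_zero_iff two_ne_zero |>.mp ((hN i j).trans h)

theorem hadamardSqrt_row_sum_eq_zero (hN : ∀ i j, N i j ^ 2 = oddHoleSlack m i j)
    (hc : N *ᵥ c = 0) (s : Finset (Fin (2*m+3))) (hs : ∀ j ∉ s, oddHoleSlack m i j = 0) :
    ∑ j ∈ s, N i j * c j = 0 := by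
  rw [← N.mulVec_apply_eq_sum_of_support c s fun j hj => hadamardSqrt_eq_zero hN (hs j hj), hc,
    Pi.zero_apply]

theorem hadamardSqrt_first_row (hN : ∀ i j, N i j ^ 2 = oddHoleSlack m i j) (hc : N *ᵥ c = 0)
    {o l : Fin (2*m+3)} (ho : o.val = 0) (hl : l.val = 2*m+2) :
    N o o * c o + N o l * c l = 0 := by
  have := hadamardSqrt_row_sum_eq_zero hN hc {o, l} fun j hj => by
    simp only [Finset.mem_insert, Finset.mem_singleton, Fin.ext_iff, ho, hl, not_or] at hj
    exact apply_first_row_of_ne ho hj.1 hj.2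
  rwa [Finset.sum_pair (Fin.ne_of_val_ne (by omega))] at this

theorem hadamardSqrt_middle_row (hN : ∀ i j, N i j ^ 2 = oddHoleSlack m i j) (hc : N *ᵥ c = 0)
    {o l : Fin (2*m+3)} (ho : o.val = 0) (hl : l.val = 2*m+2) (hi₁ : 1 ≤ i.val)
    (hi₂ : i.val ≤ 2*m+1) : N i o * c o + N i i * c i + N i l * c l = 0 := by
  have := hadamardSqrt_row_sum_eq_zero hN hc {o, i, l} fun j hj => by
    simp only [Finset.mem_insert, Finset.mem_singleton, Fin.ext_iff, ho, hl, not_or] at hj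
    exact apply_middle_row_of_ne hi₁ hi₂ hj.1 hj.2.1 hj.2.2
  rwa [Finset.sum_insert (by simp [Fin.ext_iff]; omega),
    Finset.sum_pair (Fin.ne_of_val_ne (by omega)), ← add_assoc] at this

theorem hadamardSqrt_last_row (hN : ∀ i j, N i j ^ 2 = oddHoleSlack m i j) (hc : N *ᵥ c = 0)
    {e f l : Fin (2*m+3)} (he : e.val = 1) (hf : f.val = 3) (hl : l.val = 2*m+2) :
    N l e * c e + N l f * c f + N l l * c l = 0 := by
  have := hadamardSqrt_row_sum_eq_zero hN hc {e, f, l} fun j hj => by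
    simp only [Finset.mem_insert, Finset.mem_singleton, Fin.ext_iff, he, hf, hl, not_or] at hj
    exact apply_last_row_of_ne hl hj.1 hj.2.1 hj.2.2
  rwa [Finset.sum_insert (by simp [Fin.ext_iff]; omega),
    Finset.sum_pair (Fin.ne_of_val_ne (by omega)), ← add_assoc] at this

theorem hadamardSqrt_last_coord_eq_zero (hm : 1 ≤ m)
    (hN : ∀ i j, N i j ^ 2 = oddHoleSlack m i j) (hc : N *ᵥ c = 0) {l : Fin (2*m+3)}
    (hl : l.val = 2*m+2) : c l = 0 := by
  obtain ⟨o, ho⟩ : ∃ o : Fin (2*m+3), o.val = 0 := ⟨⟨0, by omega⟩, rfl⟩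
  obtain ⟨e, he⟩ : ∃ e : Fin (2*m+3), e.val = 1 := ⟨⟨1, by omega⟩, rfl⟩
  obtain ⟨f, hf⟩ : ∃ f : Fin (2*m+3), f.val = 3 := ⟨⟨3, by omega⟩, rfl⟩
  have row_e := hadamardSqrt_middle_row hN hc ho hl he.ge (by omega)
  rw [hadamardSqrt_eq_zero hN (apply_one_first he ho), zero_mul, zero_add] at row_e
  exact eq_zero_of_hadamard_system (m := m)
    ((hN o o).trans (apply_first_first ho ho)) ((hN o l).trans (apply_first_last ho hl))
    ((hN e e).trans (apply_middle_diag he.ge (by omega)))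
    ((hN e l).trans (apply_middle_last he.ge (by omega) hl))
    ((hN f o).trans (apply_three_first hf ho))
    ((hN f f).trans (apply_middle_diag (by omega) (by omega)))
    ((hN f l).trans (apply_middle_last (by omega) (by omega) hl))
    ((hN l e).trans (apply_last_one hl he)) ((hN l f).trans (apply_last_three hl hf))
    ((hN l l).trans (apply_last_last hl hl))
    (hadamardSqrt_first_row hN hc ho hl) row_e
    (hadamardSqrt_middle_row hN hc ho hl (by omega) (by omega))
    (hadamardSqrt_last_row hN hc he hf hl)

theorem hadamardSqrt_isUnit (hm : 1 ≤ m) (hN : ∀ i j, N i j ^ 2 = oddHoleSlack m i j) :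
    IsUnit N := by
  refine mulVec_injective_iff_isUnit.mp ?_
  rw [← coe_mulVecLin, ← LinearMap.ker_eq_bot, ker_mulVecLin_eq_bot_iff]
  intro c hc
  obtain ⟨o, ho⟩ : ∃ o : Fin (2*m+3), o.val = 0 := ⟨⟨0, by omega⟩, rfl⟩
  obtain ⟨l, hl⟩ : ∃ l : Fin (2*m+3), l.val = 2*m+2 := ⟨⟨2*m+2, by omega⟩, rfl⟩
  have hcl := hadamardSqrt_last_coord_eq_zero hm hN hc hl
  have hco : c o = 0 := by
    rw [eq_neg_mul_of_mul_add_eq_zero ((hN o o).trans (apply_first_first ho ho))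
      (hadamardSqrt_first_row hN hc ho hl), hcl, mul_zero, mul_zero, neg_zero]
  funext i
  by_cases hi₀ : i.val = 0
  · rwa [show i = o from Fin.ext (hi₀.trans ho.symm)]
  by_cases hiL : i.val = 2*m+2
  · rwa [show i = l from Fin.ext (hiL.trans hl.symm)]
  have hi₂ : i.val ≤ 2*m+1 := by omega
  have row_i := hadamardSqrt_middle_row hN hc ho hl (by omega) hi₂
  simp only [hco, hcl, mul_zero, zero_add, add_zero] at row_i
  exact (mul_eq_zero.mp row_i).resolve_left fun h => by
    simpa [h] using (hN i i).trans (apply_middle_diag (by omega) hi₂)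

end oddHoleSlack

/-- for `m ≥ 2`, every Hadamard square root of `oddHoleSlack m` has rank
at least `2m+3`; in particular the minimum Hadamard square root rank exceeds `2m+2`. -/
theorem stmt19 (m : ℕ) (hm : 2 ≤ m)
    (N : Matrix (Fin (2*m+3)) (Fin (2*m+3)) ℝ)
    (hN : ∀ i j, N i j ^ 2 = oddHoleSlack m i j) :
    2*m+3 ≤ N.rank := by
  rw [N.rank_of_isUnit (oddHoleSlack.hadamardSqrt_isUnit (by omega) hN), Fintype.card_fin]
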